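/- Let s ∈ (0, √2) be such that f^(k)(s) ≠ 0 for all k ≥ 0, and for each k let i_k ∈ ℤ be the unique index with f^(k)(s) ∈ I_{i_k}. If the symbol sequence (i_k) is eventually periodic — i.e., there exist N ≥ 0 and p ≥ 1 with i_{k+p} = i_k for all k ≥ N — then s ∈ ℚ(√2). -/

import Mathlib

noncomputable section

/-- `β = √2 - 1`. -/
def β : ℝ := Real.sqrt 2 - 1

/-- `ω = √2 + 1`. -/
def ω : ℝ := Real.sqrt 2 + 1

/-- The break points `Δ_i`. -/
def Δ (i : ℤ) : ℝ :=
  if i < 0 then β ^ i.natAbs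
  else if i = 0 then β
  else Real.sqrt 2 - β ^ i.natAbs

/-- The intervals `I_i`. -/
def Iint (i : ℤ) : Set ℝ :=
  if i < 0 then Set.Ioc (Δ (i - 1)) (Δ i)
  else if i = 0 then Set.Ioo β 1
  else Set.Ico (Δ i) (Δ (i + 1))

/-- The defining formula of `f` on the interval `I_i`. -/
def fval (i : ℤ) (s : ℝ) : ℝ :=
  if i < 0 then ω ^ (i.natAbs + 1) * (Δ i - s)
  else if i = 0 then ω * (s - β)
  else ω ^ (i.natAbs + 1) * (s - Δ i)

/-- `f` is the renormalization map: `f 0 = f √2 = 0` and on each interval `I_i`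
    it is given by the corresponding affine formula. These conditions determine
    `f` uniquely on `[0, √2]`. -/
def IsLuroth (f : ℝ → ℝ) : Prop :=
  f 0 = 0 ∧ f (Real.sqrt 2) = 0 ∧ ∀ i : ℤ, ∀ s ∈ Iint i, f s = fval i s

/-- `ℚ(√2)` as a subset of `ℝ`. -/
def QSqrt2 : Set ℝ := {x | ∃ a b : ℚ, x = (a : ℝ) + (b : ℝ) * Real.sqrt 2}

/-- `ℤ[√2]` as a subset of `ℝ`. -/
def ZSqrt2 : Set ℝ := {x | ∃ m n : ℤ, x = (m : ℝ) + (n : ℝ) * Real.sqrt 2}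

/-- `M_d = {s ∈ [0,√2] : d·s ∈ ℤ[√2]}`. -/
def Mset (d : ℤ) : Set ℝ :=
  {s | s ∈ Set.Icc 0 (Real.sqrt 2) ∧ (d : ℝ) * s ∈ ZSqrt2}

/-! Write `xₖ = f^[k] s`. On `I_i` the map `f` is affine with slope `±ω^(|i|+1)` and coefficients
in `ℚ(√2)`, so `xₖ₊₁ = aₖ xₖ + bₖ` with `aₖ, bₖ ∈ ℚ(√2)` and `|aₖ| ≥ ω > 1`. If the itinerary is
periodic from `N` with period `p`, the orbits of `x_N` and `x_{N+p}` follow the same branches, so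
their distance is multiplied by at least `ω` at each step; as both stay in `[0, √2]`,
`x_{N+p} = x_N`. Then `x_N` is the fixed point of an affine map `x ↦ A x + B` with `A, B ∈ ℚ(√2)`,
`|A| > 1`, hence lies in `ℚ(√2)`, and pulling back along the invertible branches gives
`s = x₀ ∈ ℚ(√2)`. -/

theorem β_pos : 0 < β := by
  unfold β
  linarith [Real.one_lt_sqrt_two]

theorem β_lt_one : β < 1 := by
  unfold β
  linarith [Real.sqrt_two_lt_three_halves]

theorem one_lt_ω : 1 < ω := by
  unfold ω
  linarith [Real.one_lt_sqrt_two]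

namespace QSqrt2

theorem conj_ne_zero {a b : ℚ} (h : (a : ℝ) + b * √2 ≠ 0) : (a : ℝ) - b * √2 ≠ 0 := by
  rcases eq_or_ne b 0 with rfl | hb
  · simpa using h
  · exact ((irrational_sqrt_two.ratCast_mul hb).ratCast_sub (q := a)).ne_zero

def subfield : Subfield ℝ where
  carrier := QSqrt2
  zero_mem' := ⟨0, 0, by simp⟩
  one_mem' := ⟨1, 0, by simp⟩
  add_mem' := by
    rintro _ _ ⟨a, b, rfl⟩ ⟨c, d, rfl⟩
    exact ⟨a + c, b + d, by push_cast; ring⟩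
  neg_mem' := by
    rintro _ ⟨a, b, rfl⟩
    exact ⟨-a, -b, by push_cast; ring⟩
  mul_mem' := by
    rintro _ _ ⟨a, b, rfl⟩ ⟨c, d, rfl⟩
    refine ⟨a * c + 2 * b * d, a * d + b * c, ?_⟩
    push_cast
    linear_combination (b * d : ℝ) * Real.mul_self_sqrt zero_le_two
  inv_mem' := by
    rintro _ ⟨a, b, rfl⟩
    rcases eq_or_ne ((a : ℝ) + b * √2) 0 with h | h
    · exact ⟨0, 0, by simp [h]⟩
    -- multiply numerator and denominator by the conjugate `a - b√2`
    have hnorm : (((a ^ 2 - 2 * b ^ 2 : ℚ)) : ℝ) = (a + b * √2) * (a - b * √2) := by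
      push_cast
      linear_combination (b ^ 2 : ℝ) * Real.mul_self_sqrt zero_le_two
    refine ⟨a / (a ^ 2 - 2 * b ^ 2), -b / (a ^ 2 - 2 * b ^ 2), ?_⟩
    rw [Rat.cast_div, Rat.cast_div, hnorm, Rat.cast_neg]
    field_simp [conj_ne_zero h]
    ring

theorem sqrt_two_mem : √2 ∈ subfield := ⟨0, 1, by simp⟩

end QSqrt2

theorem β_mem : β ∈ QSqrt2.subfield := sub_mem QSqrt2.sqrt_two_mem (one_mem _)

theorem ω_mem : ω ∈ QSqrt2.subfield := add_mem QSqrt2.sqrt_two_mem (one_mem _)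

theorem Δ_mem (i : ℤ) : Δ i ∈ QSqrt2.subfield := by
  unfold Δ
  split_ifs
  · exact pow_mem β_mem _
  · exact β_mem
  · exact sub_mem QSqrt2.sqrt_two_mem (pow_mem β_mem _)

theorem fval_mem {i : ℤ} {s : ℝ} (hs : s ∈ QSqrt2.subfield) : fval i s ∈ QSqrt2.subfield := by
  unfold fval
  split_ifs
  · exact mul_mem (pow_mem ω_mem _) (sub_mem (Δ_mem i) hs)
  · exact mul_mem ω_mem (sub_mem hs β_mem)
  · exact mul_mem (pow_mem ω_mem _) (sub_mem hs (Δ_mem i))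

def branchSlope (i : ℤ) : ℝ := if i < 0 then -ω ^ (i.natAbs + 1) else ω ^ (i.natAbs + 1)

theorem fval_eq_branchSlope_mul_add (i : ℤ) (s : ℝ) :
    fval i s = branchSlope i * s + fval i 0 := by
  unfold fval branchSlope
  split_ifs with h₁ h₂
  · ring
  · subst h₂; ring
  · ring

theorem ω_le_abs_branchSlope (i : ℤ) : ω ≤ |branchSlope i| := by
  have : ω ≤ ω ^ (i.natAbs + 1) := le_self_pow₀ one_lt_ω.le (Nat.succ_ne_zero _)
  unfold branchSlope
  split_ifs <;> simpa [abs_of_pos (zero_lt_one.trans one_lt_ω)]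

theorem branchSlope_ne_zero (i : ℤ) : branchSlope i ≠ 0 :=
  abs_pos.1 ((zero_lt_one.trans one_lt_ω).trans_le (ω_le_abs_branchSlope i))

theorem branchSlope_mem (i : ℤ) : branchSlope i ∈ QSqrt2.subfield := by
  unfold branchSlope
  split_ifs
  · exact neg_mem (pow_mem ω_mem _)
  · exact pow_mem ω_mem _

theorem Δ_mem_Icc (i : ℤ) : Δ i ∈ Set.Icc 0 √2 := by
  have h₀ : ∀ n, 0 < β ^ n := fun n => pow_pos β_pos n
  have h₁ : ∀ n, β ^ n ≤ 1 := fun n => pow_le_one₀ β_pos.le β_lt_one.le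
  have h₂ := Real.one_lt_sqrt_two
  unfold Δ
  split_ifs
  · exact ⟨(h₀ _).le, (h₁ _).trans h₂.le⟩
  · exact ⟨β_pos.le, by linarith [β_lt_one]⟩
  · exact ⟨by linarith [h₁ i.natAbs], by linarith [h₀ i.natAbs]⟩

theorem Iint_subset_Icc (i : ℤ) : Iint i ⊆ Set.Icc 0 √2 := by
  unfold Iint
  split_ifs
  · exact Set.Ioc_subset_Icc_self.trans (Set.Icc_subset_Icc (Δ_mem_Icc _).1 (Δ_mem_Icc _).2)
  · exact Set.Ioo_subset_Icc_self.trans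
      (Set.Icc_subset_Icc β_pos.le Real.one_lt_sqrt_two.le)
  · exact Set.Ico_subset_Icc_self.trans (Set.Icc_subset_Icc (Δ_mem_Icc _).1 (Δ_mem_Icc _).2)

theorem abs_sub_le_sqrt_two_of_mem_Iint {x y : ℝ} {i j : ℤ} (hx : x ∈ Iint i) (hy : y ∈ Iint j) :
    |x - y| ≤ √2 :=
  abs_sub_le_of_nonneg_of_le (Iint_subset_Icc i hx).1 (Iint_subset_Icc i hx).2
    (Iint_subset_Icc j hy).1 (Iint_subset_Icc j hy).2

def IsAffineOrbit {R : Type*} [Mul R] [Add R] (a b x : ℕ → R) : Prop :=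
  ∀ k, x (k + 1) = a k * x k + b k

namespace IsAffineOrbit

open Finset

section CommRing

variable {R S : Type*} [CommRing R] [SetLike S R] [SubringClass S R] {K : S} {a b x : ℕ → R}

theorem exists_mem_eq_prod_mul_add (h : IsAffineOrbit a b x) (ha : ∀ k, a k ∈ K)
    (hb : ∀ k, b k ∈ K) (n : ℕ) : ∃ B ∈ K, x n = (∏ k ∈ range n, a k) * x 0 + B := by
  induction n with
  | zero => exact ⟨0, zero_mem K, by simp⟩
  | succ n ih =>
    obtain ⟨B, hB, hxn⟩ := ih
    refine ⟨a n * B + b n, add_mem (mul_mem (ha n) hB) (hb n), ?_⟩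
    rw [h n, hxn, prod_range_succ]
    ring

end CommRing

section Field

variable {F S : Type*} [Field F] [SetLike S F] [SubfieldClass S F] {K : S} {a b x : ℕ → F}

theorem mem_of_mem (h : IsAffineOrbit a b x) (ha : ∀ k, a k ∈ K) (hb : ∀ k, b k ∈ K)
    (ha₀ : ∀ k, a k ≠ 0) {n : ℕ} (hn : x n ∈ K) : x 0 ∈ K := by
  obtain ⟨B, hB, hxn⟩ := h.exists_mem_eq_prod_mul_add ha hb n
  have hA : ∏ k ∈ range n, a k ≠ 0 := prod_ne_zero_iff.2 fun k _ => ha₀ k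
  have hx₀ : x 0 = (x n - B) / ∏ k ∈ range n, a k := by
    rw [hxn]
    field_simp
    ring
  rw [hx₀]
  exact div_mem (sub_mem hn hB) (prod_mem fun k _ => ha k)

theorem mem_of_periodic (h : IsAffineOrbit a b x) (ha : ∀ k, a k ∈ K) (hb : ∀ k, b k ∈ K)
    {p : ℕ} (hA : ∏ k ∈ range p, a k ≠ 1) (hp : x p = x 0) : x 0 ∈ K := by
  obtain ⟨B, hB, hxp⟩ := h.exists_mem_eq_prod_mul_add ha hb p
  have hx₀ : x 0 = B / (1 - ∏ k ∈ range p, a k) := by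
    rw [eq_div_iff (sub_ne_zero.2 hA.symm)]
    linear_combination hxp - hp
  rw [hx₀]
  exact div_mem hB (sub_mem (one_mem K) (prod_mem fun k _ => ha k))

end Field

theorem eq_of_expanding_of_bounded {a b x y : ℕ → ℝ} {c C : ℝ} (hx : IsAffineOrbit a b x)
    (hy : IsAffineOrbit a b y) (hc : 1 < c) (ha : ∀ k, c ≤ |a k|) (hC : ∀ k, |y k - x k| ≤ C) :
    y 0 = x 0 := by
  have hgrow : ∀ n, c ^ n * |y 0 - x 0| ≤ |y n - x n| := by
    intro n
    induction n with
    | zero => simp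
    | succ n ih =>
      calc c ^ (n + 1) * |y 0 - x 0| = c * (c ^ n * |y 0 - x 0|) := by ring
        _ ≤ |a n| * |y n - x n| := by gcongr; exact ha n
        _ = |y (n + 1) - x (n + 1)| := by rw [hx n, hy n, ← abs_mul]; ring_nf
  by_contra hne
  have hd : 0 < |y 0 - x 0| := abs_pos.2 (sub_ne_zero.2 hne)
  obtain ⟨n, hn⟩ := pow_unbounded_of_one_lt (C / |y 0 - x 0|) hc
  rw [div_lt_iff₀ hd] at hn
  linarith [hgrow n, hC n]

end IsAffineOrbit

theorem one_lt_abs_prod {a : ℕ → ℝ} {c : ℝ} (hc : 1 < c) (ha : ∀ k, c ≤ |a k|) {n : ℕ}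
    (hn : n ≠ 0) : 1 < |∏ k ∈ Finset.range n, a k| := by
  rw [Finset.abs_prod]
  calc 1 < c ^ n := one_lt_pow₀ hc hn
    _ = ∏ _k ∈ Finset.range n, c := by rw [Finset.prod_const, Finset.card_range]
    _ ≤ ∏ k ∈ Finset.range n, |a k| :=
      Finset.prod_le_prod (fun _ _ => (zero_lt_one.trans hc).le) fun k _ => ha k

theorem IsLuroth.isAffineOrbit {f : ℝ → ℝ} (hf : IsLuroth f) {s : ℝ} {idx : ℕ → ℤ}
    (hmem : ∀ k, f^[k] s ∈ Iint (idx k)) :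
    IsAffineOrbit (fun k => branchSlope (idx k)) (fun k => fval (idx k) 0) (fun k => f^[k] s) :=
  fun k => by
    dsimp only
    rw [Function.iterate_succ_apply', hf.2.2 _ _ (hmem k), fval_eq_branchSlope_mul_add]

/-- if `s ∈ (0,√2)` has a never-vanishing orbit whose itinerary
is eventually periodic, then `s ∈ ℚ(√2)`. -/
theorem luroth_eventually_periodic_itinerary_mem_Qsqrt2
    (f : ℝ → ℝ) (hf : IsLuroth f) :
    ∀ s ∈ Set.Ioo (0 : ℝ) (Real.sqrt 2),
      (∀ k : ℕ, f^[k] s ≠ 0) →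
      ∀ idx : ℕ → ℤ, (∀ k : ℕ, f^[k] s ∈ Iint (idx k)) →
      (∃ N p : ℕ, 1 ≤ p ∧ ∀ k : ℕ, N ≤ k → idx (k + p) = idx k) →
      s ∈ QSqrt2 := by
  rintro s - - idx hmem ⟨N, p, hp, hper⟩
  have hslope := fun k => branchSlope_mem (idx k)
  have hicpt := fun k => fval_mem (i := idx k) (zero_mem QSqrt2.subfield)
  have hmemN : ∀ k, f^[k] (f^[N] s) ∈ Iint (idx (N + k)) := fun k => by
    rw [← Function.iterate_add_apply, add_comm]
    exact hmem _
  have hmemNp : ∀ k, f^[k] (f^[N + p] s) ∈ Iint (idx (N + k)) := fun k => by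
    rw [← Function.iterate_add_apply, ← hper (N + k) (by omega), add_right_comm, add_comm k]
    exact hmem _
  -- both orbits follow the same expanding branches and stay in `[0, √2]`
  have hcycle : f^[N + p] s = f^[N] s :=
    (hf.isAffineOrbit hmemN).eq_of_expanding_of_bounded (hf.isAffineOrbit hmemNp) one_lt_ω
      (fun k => ω_le_abs_branchSlope _)
      fun k => abs_sub_le_sqrt_two_of_mem_Iint (hmemNp k) (hmemN k)
  have hA : ∏ k ∈ Finset.range p, branchSlope (idx (N + k)) ≠ 1 := fun h1 =>
    (one_lt_abs_prod (n := p) one_lt_ω (fun k => ω_le_abs_branchSlope _) (by omega)).ne'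
      (by rw [h1, abs_one])
  have hxN : f^[N] s ∈ QSqrt2.subfield :=
    (hf.isAffineOrbit hmemN).mem_of_periodic (fun k => hslope _) (fun k => hicpt _) hA
      (by rw [← Function.iterate_add_apply, add_comm, hcycle]; rfl)
  exact (hf.isAffineOrbit hmem).mem_of_mem hslope hicpt (fun k => branchSlope_ne_zero _) hxN
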